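/- Let T ∈ GF(2)^{m×m×m} be a nonzero 3-tensor and (i_0,j_0,k_0) an index triple with T(i_0,j_0,k_0) = 1. Then there exist invertible matrices χ_A, χ_B, χ_C ∈ GL(m,2) such that the transformed tensor T' satisfies T'(i_0,j_0,k_0) = 1 and T' has no other nonzero component edge-incident with (i_0,j_0,k_0); that is, for every (i,j,k) ≠ (i_0,j_0,k_0) with T'(i,j,k) = 1, at most one of the equalities i = i_0, j = j_0, k = k_0 holds. -/
import Mathlib


/-- Color-dependent change-of-basis action on 3-index binary component tensors. -/
def tensorAct {m : ℕ} (A B C : Matrix (Fin m) (Fin m) (ZMod 2))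
    (T : Fin m → Fin m → Fin m → ZMod 2) : Fin m → Fin m → Fin m → ZMod 2 :=
  fun i j k => ∑ i' : Fin m, ∑ j' : Fin m, ∑ k' : Fin m,
    A i' i * B j' j * C k' k * T i' j' k'

/-- `I + e_{i₀} vᵀ` as a matrix. -/
def elemM {m : ℕ} (i₀ : Fin m) (v : Fin m → ZMod 2) : Matrix (Fin m) (Fin m) (ZMod 2) :=
  fun i' i => (if i' = i then 1 else 0) + (if i' = i₀ then v i else 0)

lemma sum_elemM {m : ℕ} (i₀ : Fin m) (v : Fin m → ZMod 2) (i : Fin m)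
    (f : Fin m → ZMod 2) :
    ∑ i' : Fin m, elemM i₀ v i' i * f i' = f i + v i * f i₀ := by
  simp [elemM, add_mul, ite_mul, Finset.sum_add_distrib]

lemma elemM_sq {m : ℕ} (i₀ : Fin m) (v : Fin m → ZMod 2) (hv : v i₀ = 0) :
    elemM i₀ v * elemM i₀ v = 1 := by
  ext i' i
  rw [Matrix.mul_apply]
  have : ∀ a, elemM i₀ v i' a * elemM i₀ v a i
      = (if i' = a then elemM i₀ v a i else 0)
        + (if i' = i₀ then v a * elemM i₀ v a i else 0) := by
    intro a
    simp [elemM, add_mul, ite_mul]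
  simp only [this, Finset.sum_add_distrib, Finset.sum_ite_eq, Finset.mem_univ, if_true]
  by_cases h : i' = i₀
  · subst h
    simp [elemM, hv, mul_add, mul_ite, Finset.sum_add_distrib, Matrix.one_apply]
    by_cases h2 : i' = i <;>
      simp [h2, show (2 : ZMod 2) = 0 from rfl, two_mul, CharTwo.add_self_eq_zero] <;>
      ring_nf <;> simp [show (2 : ZMod 2) = 0 from rfl]
  · simp [elemM, h, Matrix.one_apply]

lemma act_eval {m : ℕ} (i₀ j₀ k₀ : Fin m) (α β γ : Fin m → ZMod 2)
    (T : Fin m → Fin m → Fin m → ZMod 2) (i j k : Fin m) :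
    tensorAct (elemM i₀ α) (elemM j₀ β) (elemM k₀ γ) T i j k
      = (T i j k + γ k * T i j k₀) + β j * (T i j₀ k + γ k * T i j₀ k₀)
        + α i * ((T i₀ j k + γ k * T i₀ j k₀) + β j * (T i₀ j₀ k + γ k * T i₀ j₀ k₀)) := by
  unfold tensorAct
  simp only [mul_assoc, ← Finset.mul_sum]
  rw [sum_elemM]
  simp only [sum_elemM]

/-- Any nonzero component of a 3-tensor over GF(2) can, by an invertible change of basis
at each index, be made edge-disjoint from all other nonzero components: every other
nonzero component agrees with (i₀,j₀,k₀) in at most one coordinate. -/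
theorem edge_disjoint_normal_form {m : ℕ}
    (T : Fin m → Fin m → Fin m → ZMod 2) (hT : T ≠ 0)
    (i₀ j₀ k₀ : Fin m) (h₀ : T i₀ j₀ k₀ = 1) :
    ∃ A B C : Matrix (Fin m) (Fin m) (ZMod 2), IsUnit A ∧ IsUnit B ∧ IsUnit C ∧
      tensorAct A B C T i₀ j₀ k₀ = 1 ∧
      ∀ i j k : Fin m, tensorAct A B C T i j k = 1 → (i, j, k) ≠ (i₀, j₀, k₀) →
        ¬((i = i₀ ∧ j = j₀) ∨ (i = i₀ ∧ k = k₀) ∨ (j = j₀ ∧ k = k₀)) := by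
  set α : Fin m → ZMod 2 := fun i => if i = i₀ then 0 else T i j₀ k₀ with hα
  set β : Fin m → ZMod 2 := fun j => if j = j₀ then 0 else T i₀ j k₀ with hβ
  set γ : Fin m → ZMod 2 := fun k => if k = k₀ then 0 else T i₀ j₀ k with hγ
  have uA := elemM_sq i₀ α (by simp [hα])
  have uB := elemM_sq j₀ β (by simp [hβ])
  have uC := elemM_sq k₀ γ (by simp [hγ])
  refine ⟨elemM i₀ α, elemM j₀ β, elemM k₀ γ,
    ⟨⟨_, _, uA, uA⟩, rfl⟩, ⟨⟨_, _, uB, uB⟩, rfl⟩, ⟨⟨_, _, uC, uC⟩, rfl⟩, ?_, ?_⟩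
  · rw [act_eval]; simp [hα, hβ, hγ, h₀]
  · intro i j k h1 hne
    rintro (⟨hi, hj⟩ | ⟨hi, hk⟩ | ⟨hj, hk⟩)
    · subst hi; subst hj
      have hk : k ≠ k₀ := by rintro rfl; exact hne rfl
      rw [act_eval] at h1
      simp [hα, hβ, hγ, hk, h₀, CharTwo.add_self_eq_zero] at h1
    · subst hi; subst hk
      have hj : j ≠ j₀ := by rintro rfl; exact hne rfl
      rw [act_eval] at h1
      simp [hα, hβ, hγ, hj, h₀, CharTwo.add_self_eq_zero] at h1
    · subst hj; subst hk
      have hi : i ≠ i₀ := by rintro rfl; exact hne rfl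
      rw [act_eval] at h1
      simp [hα, hβ, hγ, hi, h₀, CharTwo.add_self_eq_zero] at h1
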